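/- Any graph G with average degree d(G) > k - 1 contains a path of length k (with k edges). -/

import Mathlib

/-!
Pass to a vertex set `S`, minimal under inclusion, on which `G` still has average degree
`> k - 1`. Minimality forces every vertex of `G[S]` to have degree `≥ k / 2` (deleting a vertex of
smaller degree keeps the average above `k - 1`), forces `G[S]` to be connected (one of its
components would do), and forces `|S| > k`.

In such a graph a path `P = v 0, …, v l` with `l < k` can always be lengthened. Either an endpoint
has a neighbour off `P`, or all `≥ k / 2` neighbours of both endpoints `x = v 0`, `y = v l` lie on
`P`; then by pigeonhole there is an `i` with `x ~ v (i + 1)` and `y ~ v i`, which closes `P` into a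
cycle through its `l + 1` vertices. As `|S| > l + 1`, connectivity yields a vertex outside this
cycle adjacent to it, and opening the cycle there gives a path of length `l + 1`.
-/

open Finset

namespace SimpleGraph

open Walk

variable {V : Type*} {G : SimpleGraph V}

section DegreeIn

variable [DecidableRel G.Adj]

variable (G) in
def degreeIn (s : Finset V) (v : V) : ℕ := #{w ∈ s | G.Adj v w}

lemma degreeIn_univ [Fintype V] (v : V) : G.degreeIn univ v = G.degree v := by
  rw [degreeIn, ← card_neighborFinset_eq_degree, neighborFinset_eq_filter]

lemma degreeIn_eq_sum (s : Finset V) (v : V) :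
    G.degreeIn s v = ∑ w ∈ s, if G.Adj v w then 1 else 0 := by
  rw [degreeIn, card_filter]

lemma degreeIn_lt_card {s : Finset V} {v : V} (hv : v ∈ s) : G.degreeIn s v < #s :=
  card_lt_card (filter_ssubset.2 ⟨v, hv, G.irrefl⟩)

lemma sum_degreeIn_le (s : Finset V) : ∑ v ∈ s, G.degreeIn s v ≤ #s * (#s - 1) := by
  simpa using sum_le_card_nsmul s _ (#s - 1) fun v hv =>
    Nat.le_sub_one_of_lt (degreeIn_lt_card hv)

lemma sum_degreeIn_comm (s t : Finset V) :
    ∑ u ∈ s, G.degreeIn t u = ∑ u ∈ t, G.degreeIn s u := by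
  simp only [degreeIn_eq_sum]
  rw [sum_comm]
  simp only [G.adj_comm]

variable [DecidableEq V]

lemma degreeIn_add_degreeIn_sdiff {s t : Finset V} (hts : t ⊆ s) (v : V) :
    G.degreeIn t v + G.degreeIn (s \ t) v = G.degreeIn s v := by
  simp only [degreeIn_eq_sum]
  rw [add_comm, sum_sdiff hts]

lemma sum_degreeIn_eq {s t : Finset V} (hts : t ⊆ s) :
    ∑ u ∈ s, G.degreeIn s u = ∑ u ∈ t, G.degreeIn t u + ∑ u ∈ s \ t, G.degreeIn (s \ t) u +
      2 * ∑ u ∈ t, G.degreeIn (s \ t) u := by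
  have split (f : V → ℕ) : ∑ u ∈ s, f u = ∑ u ∈ t, f u + ∑ u ∈ s \ t, f u :=
    (sum_sdiff hts).symm.trans (add_comm _ _)
  simp only [← degreeIn_add_degreeIn_sdiff hts, sum_add_distrib, split,
    sum_degreeIn_comm (s \ t) t]
  ring

lemma sum_degreeIn_erase {s : Finset V} {v : V} (hv : v ∈ s) :
    ∑ u ∈ s, G.degreeIn s u = ∑ u ∈ s.erase v, G.degreeIn (s.erase v) u + 2 * G.degreeIn s v := by
  have hself : G.degreeIn (s.erase v) v = G.degreeIn s v := by
    rw [degreeIn, degreeIn, filter_erase, erase_eq_of_notMem (by simp)]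
  have hsingle : G.degreeIn {v} v = 0 := by simp [degreeIn]
  rw [sum_degreeIn_eq (singleton_subset_iff.2 hv), sdiff_singleton_eq_erase]
  simp [hsingle, hself]

lemma sum_degreeIn_of_forall_not_adj {s t : Finset V} (hts : t ⊆ s)
    (h : ∀ a ∈ t, ∀ b ∈ s \ t, ¬ G.Adj a b) :
    ∑ u ∈ s, G.degreeIn s u = ∑ u ∈ t, G.degreeIn t u + ∑ u ∈ s \ t, G.degreeIn (s \ t) u := by
  have hcross : ∑ u ∈ t, G.degreeIn (s \ t) u = 0 :=
    sum_eq_zero fun a ha => card_eq_zero.2 (filter_eq_empty_iff.2 (h a ha))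
  rw [sum_degreeIn_eq hts, hcross, mul_zero, add_zero]

end DegreeIn

section Paths

variable (G) in
lemma exists_walk_support_eq_map_range (f : ℕ → V) :
    ∀ m, (∀ t < m, G.Adj (f t) (f (t + 1))) →
      ∃ p : G.Walk (f 0) (f m), p.support = (List.range (m + 1)).map f
  | 0, _ => ⟨nil, rfl⟩
  | m + 1, hadj => by
    obtain ⟨p, hp⟩ := exists_walk_support_eq_map_range (fun t => f (t + 1)) m
      fun t ht => hadj (t + 1) (by omega)
    refine ⟨cons (hadj 0 (by omega)) p, ?_⟩
    rw [support_cons, hp, List.range_succ_eq_map (n := m + 1), List.map_cons, List.map_map]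
    rfl

lemma exists_isPath_of_injOn {f : ℕ → V} {m : ℕ} (hadj : ∀ t < m, G.Adj (f t) (f (t + 1)))
    (hinj : Set.InjOn f (Set.Iic m)) :
    ∃ p : G.Walk (f 0) (f m), p.IsPath ∧ p.length = m ∧ ∀ w ∈ p.support, ∃ t ≤ m, f t = w := by
  obtain ⟨p, hp⟩ := G.exists_walk_support_eq_map_range f m hadj
  refine ⟨p, IsPath.mk' ?_, ?_, ?_⟩
  · rw [hp]
    refine List.nodup_range.map_on fun a ha b hb hab => hinj ?_ ?_ hab <;>
      simp_all
  · simpa [hp] using p.length_support.symm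
  · simp [hp]

lemma exists_isPath_of_cycle {g : ℕ → V} {l : ℕ} (hadj : ∀ t < l, G.Adj (g t) (g (t + 1)))
    (hclose : G.Adj (g l) (g 0)) (hinj : Set.InjOn g (Set.Iic l)) {u : V}
    (hu : ∀ t ≤ l, g t ≠ u) {j : ℕ} (hj : j ≤ l) (huj : G.Adj u (g j)) :
    ∃ (a b : V) (p : G.Walk a b), p.IsPath ∧ p.length = l + 1 ∧
      ∀ w ∈ p.support, w = u ∨ ∃ t ≤ l, g t = w := by
  -- `f` below runs through `u, g j, g (j + 1), …, g l, g 0, …, g (j - 1)`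
  let σ (t : ℕ) : ℕ := if j + t ≤ l + 1 then j + t - 1 else j + t - l - 2
  have hσ (t : ℕ) (h1 : 1 ≤ t) (h2 : t ≤ l + 1) : σ t ≤ l := by
    simp only [σ]; split_ifs <;> omega
  let f (t : ℕ) : V := if t = 0 then u else g (σ t)
  have hf (t : ℕ) (ht : 1 ≤ t) : f t = g (σ t) := if_neg (by omega)
  have hfadj : ∀ t < l + 1, G.Adj (f t) (f (t + 1)) := by
    intro t ht
    rw [hf (t + 1) (by omega)]
    rcases Nat.eq_zero_or_pos t with rfl | h1
    · simpa [f, σ, hj] using huj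
    rw [hf t h1]
    simp only [σ]
    split_ifs with h h' h'
    · convert hadj (j + t - 1) (by omega) using 2; omega
    · convert hclose using 2 <;> omega
    · omega
    · convert hadj (j + t - l - 2) (by omega) using 2; omega
  have hfinj : Set.InjOn f (Set.Iic (l + 1)) := by
    intro s hs t ht hst
    simp only [Set.mem_Iic] at hs ht
    rcases Nat.eq_zero_or_pos s with rfl | hs1 <;> rcases Nat.eq_zero_or_pos t with rfl | ht1
    · rfl
    · exact absurd (hst.symm.trans (if_pos rfl)) (hf t ht1 ▸ hu _ (hσ t ht1 ht))
    · exact absurd (hst.trans (if_pos rfl)) (hf s hs1 ▸ hu _ (hσ s hs1 hs))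
    · rw [hf s hs1, hf t ht1] at hst
      have := hinj (Set.mem_Iic.2 (hσ s hs1 hs)) (Set.mem_Iic.2 (hσ t ht1 ht)) hst
      simp only [σ] at this
      split_ifs at this <;> omega
  obtain ⟨p, hp, hpl, hps⟩ := exists_isPath_of_injOn hfadj hfinj
  refine ⟨_, _, p, hp, hpl, fun w hw => ?_⟩
  obtain ⟨t, ht, rfl⟩ := hps w hw
  rcases Nat.eq_zero_or_pos t with rfl | ht1
  · exact Or.inl rfl
  · exact Or.inr ⟨σ t, hσ t ht1 ht, (hf t ht1).symm⟩

/-- **Pósa rotation**: chords `x ~ v (i + 1)` and `y ~ v i` close `p` into the cycle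
`v 0, …, v i, v l, v (l - 1), …, v (i + 1)`. -/
lemma exists_isPath_succ_of_chords {x y : V} {p : G.Walk x y} (hp : p.IsPath) {i : ℕ}
    (hi : i < p.length) (hx : G.Adj x (p.getVert (i + 1))) (hy : G.Adj y (p.getVert i))
    {u w : V} (hu : u ∉ p.support) (hw : w ∈ p.support) (huw : G.Adj u w) :
    ∃ (a b : V) (q : G.Walk a b), q.IsPath ∧ q.length = p.length + 1 ∧
      ∀ z ∈ q.support, z = u ∨ z ∈ p.support := by
  set l := p.length
  let σ (t : ℕ) : ℕ := if t ≤ i then t else l + i + 1 - t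
  have hσ (t : ℕ) (ht : t ≤ l) : σ t ≤ l := by simp only [σ]; split_ifs <;> omega
  let g (t : ℕ) : V := p.getVert (σ t)
  have hgadj : ∀ t < l, G.Adj (g t) (g (t + 1)) := by
    intro t ht
    simp only [g, σ]
    split_ifs with h h' h'
    · exact p.adj_getVert_succ (by omega)
    · convert hy.symm using 2
      · omega
      · rw [show l + i + 1 - (t + 1) = l by omega]; exact p.getVert_length
    · omega
    · convert (p.adj_getVert_succ (i := l + i - t) (by omega)).symm using 2 <;> omega
  have hgclose : G.Adj (g l) (g 0) := by
    simpa [g, σ, show ¬ l ≤ i by omega, show l + i + 1 - l = i + 1 by omega] using hx.symm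
  have hginj : Set.InjOn g (Set.Iic l) := by
    intro s hs t ht hst
    simp only [Set.mem_Iic] at hs ht
    have := hp.getVert_injOn (Set.mem_ofPred.2 (hσ s hs)) (Set.mem_ofPred.2 (hσ t ht)) hst
    simp only [σ] at this
    split_ifs at this <;> omega
  obtain ⟨s, rfl, hs⟩ := mem_support_iff_exists_getVert.1 hw
  have hσσ : g (σ s) = p.getVert s := by
    simp only [g, σ]
    split_ifs <;> congr 1 <;> omega
  obtain ⟨a, b, q, hq, hql, hqs⟩ := exists_isPath_of_cycle hgadj hgclose hginj
    (u := u) (fun t _ h => hu (h ▸ p.getVert_mem_support _)) (hσ s hs) (hσσ ▸ huw)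
  refine ⟨a, b, q, hq, hql, fun z hz => (hqs z hz).imp_right ?_⟩
  rintro ⟨t, -, rfl⟩
  exact p.getVert_mem_support _

end Paths

section Extension

variable [DecidableRel G.Adj] [DecidableEq V] {S : Finset V} {k : ℕ}

lemma exists_crossing_chords {x y : V} (p : G.Walk x y)
    (hx : ∀ z ∈ S, G.Adj x z → z ∈ p.support) (hy : ∀ z ∈ S, G.Adj y z → z ∈ p.support)
    (hlt : p.length < G.degreeIn S x + G.degreeIn S y) :
    ∃ i < p.length, G.Adj x (p.getVert (i + 1)) ∧ G.Adj y (p.getVert i) := by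
  set A := {t ∈ range p.length | G.Adj x (p.getVert (t + 1))}
  set B := {t ∈ range p.length | G.Adj y (p.getVert t)}
  have hA : G.degreeIn S x ≤ #A := by
    refine (card_le_card fun z hz => ?_).trans (card_image_le (f := fun t => p.getVert (t + 1)))
    rw [mem_filter] at hz
    obtain ⟨n, rfl, hn⟩ := mem_support_iff_exists_getVert.1 (hx _ hz.1 hz.2)
    have hn0 : n ≠ 0 := by rintro rfl; exact G.irrefl (p.getVert_zero ▸ hz.2)
    refine mem_image.2 ⟨n - 1, mem_filter.2 ⟨mem_range.2 (by omega), ?_⟩, ?_⟩ <;>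
      rw [Nat.sub_add_cancel (Nat.pos_of_ne_zero hn0)]
    exact hz.2
  have hB : G.degreeIn S y ≤ #B := by
    refine (card_le_card fun z hz => ?_).trans (card_image_le (f := p.getVert))
    rw [mem_filter] at hz
    obtain ⟨n, rfl, hn⟩ := mem_support_iff_exists_getVert.1 (hy _ hz.1 hz.2)
    have hnl : n ≠ p.length := by rintro rfl; exact G.irrefl (p.getVert_length ▸ hz.2)
    exact mem_image.2 ⟨n, mem_filter.2 ⟨mem_range.2 (by omega), hz.2⟩, rfl⟩
  obtain ⟨i, hi⟩ := inter_nonempty_of_card_lt_card_add_card (t := A) (u := B)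
    (filter_subset _ _) (filter_subset _ _) (by rw [card_range]; omega)
  simp only [A, B, mem_inter, mem_filter, mem_range] at hi
  exact ⟨i, hi.1.1, hi.1.2, hi.2.2⟩

lemma exists_isPath_length_succ (hdeg : ∀ v ∈ S, k ≤ 2 * G.degreeIn S v)
    (hcut : ∀ C ⊆ S, C.Nonempty → C ≠ S → ∃ a ∈ C, ∃ b ∈ S \ C, G.Adj a b)
    {x y : V} {p : G.Walk x y} (hp : p.IsPath) (hpS : ∀ z ∈ p.support, z ∈ S)
    (hk : p.length < k) (hS : p.length + 1 < #S) :
    ∃ (a b : V) (q : G.Walk a b), q.IsPath ∧ (∀ z ∈ q.support, z ∈ S) ∧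
      q.length = p.length + 1 := by
  by_cases hx : ∃ z ∈ S, G.Adj x z ∧ z ∉ p.support
  · obtain ⟨z, hzS, hxz, hz⟩ := hx
    exact ⟨z, y, cons hxz.symm p, hp.cons hz, by simpa [hzS] using hpS, by simp⟩
  by_cases hy : ∃ z ∈ S, G.Adj y z ∧ z ∉ p.support
  · obtain ⟨z, hzS, hyz, hz⟩ := hy
    exact ⟨z, x, cons hyz.symm p.reverse, hp.reverse.cons (by simpa using hz),
      by simpa [hzS] using hpS, by simp⟩
  push Not at hx hy
  obtain ⟨i, hi, hxi, hyi⟩ := exists_crossing_chords p hx hy (by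
    have := hdeg x (hpS x p.start_mem_support)
    have := hdeg y (hpS y p.end_mem_support)
    omega)
  have hC : p.support.toFinset ≠ S := by
    intro h
    have := congrArg card h
    rw [List.toFinset_card_of_nodup hp.support_nodup, length_support] at this
    omega
  obtain ⟨a, ha, b, hb, hab⟩ :=
    hcut _ (fun z hz => hpS z (List.mem_toFinset.1 hz)) ⟨x, by simp⟩ hC
  rw [mem_sdiff, List.mem_toFinset] at hb
  obtain ⟨a', b', q, hq, hql, hqs⟩ :=
    exists_isPath_succ_of_chords hp hi hxi hyi hb.2 (List.mem_toFinset.1 ha) hab.symm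
  exact ⟨a', b', q, hq, fun z hz => (hqs z hz).elim (· ▸ hb.1) (hpS z), hql⟩

lemma exists_isPath_of_le_two_mul_degreeIn (hdeg : ∀ v ∈ S, k ≤ 2 * G.degreeIn S v)
    (hcut : ∀ C ⊆ S, C.Nonempty → C ≠ S → ∃ a ∈ C, ∃ b ∈ S \ C, G.Adj a b) (hk : k < #S) :
    ∃ (a b : V) (p : G.Walk a b), p.IsPath ∧ p.length = k := by
  suffices ∀ l ≤ k, ∃ (a b : V) (p : G.Walk a b), p.IsPath ∧ (∀ z ∈ p.support, z ∈ S) ∧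
      p.length = l by
    obtain ⟨a, b, p, hp, -, hl⟩ := this k le_rfl
    exact ⟨a, b, p, hp, hl⟩
  intro l hl
  induction l with
  | zero =>
    obtain ⟨v, hv⟩ := card_pos.1 (by omega : 0 < #S)
    exact ⟨v, v, nil, .nil, by simpa using hv, rfl⟩
  | succ l ih =>
    obtain ⟨a, b, p, hp, hpS, rfl⟩ := ih (by omega)
    exact exists_isPath_length_succ hdeg hcut hp hpS (by omega) (by omega)

theorem exists_isPath_of_mul_lt_sum_degreeIn {s : Finset V}
    (h : (k - 1) * #s < ∑ v ∈ s, G.degreeIn s v) :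
    ∃ (a b : V) (p : G.Walk a b), p.IsPath ∧ p.length = k := by
  obtain ⟨S, hS, hmin⟩ := wellFounded_lt.has_min
    {t : Finset V | (k - 1) * #t < ∑ v ∈ t, G.degreeIn t v} ⟨s, h⟩
  simp only [Set.mem_ofPred_eq] at hS hmin
  refine exists_isPath_of_le_two_mul_degreeIn (S := S) (fun v hv => ?_)
    (fun C hCS hC hCS' => ?_) ?_
  · by_contra! hlt
    refine hmin (S.erase v) ?_ (erase_ssubset hv)
    have := sum_degreeIn_erase (G := G) hv
    have := Nat.mul_sub_one (k - 1) #S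
    have := Nat.le_mul_of_pos_right (k - 1) (card_pos.2 ⟨v, hv⟩)
    rw [card_erase_of_mem hv]
    omega
  · by_contra! hno
    have hsum := sum_degreeIn_of_forall_not_adj hCS hno
    have hcard := congrArg ((k - 1) * ·) (card_sdiff_add_card_eq_card hCS)
    simp only [mul_add] at hcard
    by_cases hCd : (k - 1) * #C < ∑ v ∈ C, G.degreeIn C v
    · exact hmin C hCd (ssubset_of_subset_of_ne hCS hCS')
    · exact hmin (S \ C) (by omega) (sdiff_ssubset hCS hC)
  · have : k - 1 < #S - 1 := Nat.lt_of_mul_lt_mul_left (a := #S) <| by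
      rw [mul_comm]; exact hS.trans_le (sum_degreeIn_le S)
    omega

end Extension

end SimpleGraph

/-- Erdős–Gallai: any graph with average degree `d(G) > k - 1` contains a path of length
`k`, where `d(G) = 2 e(G) / v(G)`. -/
theorem stmt10 {V : Type*} [Fintype V] [DecidableEq V] [Nonempty V]
    (G : SimpleGraph V) [DecidableRel G.Adj] (k : ℕ)
    (h : (k : ℝ) - 1 < 2 * (G.edgeFinset.card : ℝ) / (Fintype.card V : ℝ)) :
    ∃ (x y : V) (p : G.Walk x y), p.IsPath ∧ p.length = k := by
  rcases Nat.eq_zero_or_pos k with rfl | hk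
  · obtain ⟨v⟩ := ‹Nonempty V›
    exact ⟨v, v, .nil, .nil, rfl⟩
  apply G.exists_isPath_of_mul_lt_sum_degreeIn (s := univ)
  rw [lt_div_iff₀ (by exact_mod_cast Fintype.card_pos)] at h
  simp only [SimpleGraph.degreeIn_univ, G.sum_degrees_eq_twice_card_edges, card_univ]
  exact_mod_cast (show ((k - 1 : ℕ) : ℝ) * Fintype.card V < 2 * #G.edgeFinset by
    rwa [Nat.cast_sub hk, Nat.cast_one])
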